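/- Let Λ be a full-rank lattice in ℝ² and let k ≥ 3 be an integer and 0 < ε < 1/4. Suppose there exist constants C₀ > 0 and κ > 0 such that |ν₁ + ν₂| ≥ C₀ · max(|ν₁|, |ν₂|, 1)^{-κ} for all nonzero (ν₁, ν₂) ∈ Λ. Then the sum ∑_{0 ≠ ν ∈ Λ} exp(-π²(|ν₁| + |ν₂| - |ν₁+ν₂|)) · |ν₁|^ε · |ν₂|^ε · |ν₁+ν₂|^{-k-1/2} converges (summing only over ν with ν₁ ≠ 0, ν₂ ≠ 0, ν₁ + ν₂ ≠ 0). -/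

import Mathlib

open Real

set_option maxHeartbeats 1000000 in
lemma stmt9_aux (k : ℕ) (hk : 3 ≤ k) (ε C₀ κ r₀ : ℝ) (hε : 0 < ε) (hε' : ε < 1/4)
    (hC₀ : 0 < C₀) (hκ : 0 < κ) (hr₀ : 0 < r₀) :
    ∃ M : ℝ, ∀ a b : ℝ, a ≠ 0 → b ≠ 0 → a + b ≠ 0 → r₀ ≤ max |a| |b| →
      C₀ * (max (max |a| |b|) 1) ^ (-κ) ≤ |a + b| →
      Real.exp (-(Real.pi ^ 2) * (|a| + |b| - |a + b|)) * |a| ^ ε * |b| ^ ε *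
        |a + b| ^ (-(k : ℝ) - 1/2) ≤ M * (max |a| |b|) ^ (-3 : ℝ) := by
  have hk' : (3:ℝ) ≤ (k:ℝ) := by exact_mod_cast hk
  set e₀ : ℝ := -(k : ℝ) - 1/2 with he₀def
  have he₀neg : e₀ ≤ 0 := by simp only [he₀def]; linarith
  set κ' : ℝ := κ * ((k:ℝ) + 1/2) with hκ'def
  have hκ'pos : 0 < κ' := by positivity
  set Q : ℕ := ⌈κ'⌉₊ + 5 with hQdef
  set M₁ : ℝ := 2 ^ ((k:ℝ) + 1/2) * r₀ ^ (2*ε + e₀ + 3) with hM₁def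
  set M₂ : ℝ := C₀ ^ e₀ * ((Nat.factorial Q : ℝ) * Real.exp 1) with hM₂def
  refine ⟨max M₁ M₂, fun a b ha hb hs hr hbak => ?_⟩
  set m : ℝ := max |a| |b| with hmdef
  have hm : 0 < m := lt_of_lt_of_le hr₀ hr
  have hsabs : 0 < |a + b| := abs_pos.mpr hs
  have haabs : 0 < |a| := abs_pos.mpr ha
  have hbabs : 0 < |b| := abs_pos.mpr hb
  have ham : |a| ≤ m := le_max_left _ _
  have hbm : |b| ≤ m := le_max_right _ _
  rw [show max M₁ M₂ * m ^ (-3:ℝ) = max M₁ M₂ / m ^ (3:ℝ) by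
        rw [Real.rpow_neg hm.le, div_eq_mul_inv],
      le_div_iff₀ (Real.rpow_pos_of_pos hm 3)]
  have hDnn : 0 ≤ |a| + |b| - |a + b| := by
    have := abs_add_le a b; linarith
  rcases le_or_gt (m / 2) |a + b| with hcase | hcase
  · -- |a+b| large
    calc Real.exp (-(Real.pi ^ 2) * (|a| + |b| - |a + b|)) * |a| ^ ε * |b| ^ ε *
          |a + b| ^ e₀ * m ^ (3:ℝ)
        ≤ 1 * m ^ ε * m ^ ε * (m/2) ^ e₀ * m ^ (3:ℝ) := by
          have h1 : Real.exp (-(Real.pi ^ 2) * (|a| + |b| - |a + b|)) ≤ 1 := by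
            rw [Real.exp_le_one_iff]
            nlinarith [Real.pi_gt_three]
          have h2 : |a| ^ ε ≤ m ^ ε := Real.rpow_le_rpow (abs_nonneg a) ham hε.le
          have h3 : |b| ^ ε ≤ m ^ ε := Real.rpow_le_rpow (abs_nonneg b) hbm hε.le
          have h4 : |a + b| ^ e₀ ≤ (m/2) ^ e₀ :=
            Real.rpow_le_rpow_of_nonpos (by positivity) hcase he₀neg
          gcongr
      _ = m ^ (2*ε + e₀ + 3) * (2:ℝ) ^ ((k:ℝ) + 1/2) := by
          rw [one_mul, Real.div_rpow hm.le (by norm_num), div_eq_mul_inv,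
            ← Real.rpow_neg (by norm_num : (0:ℝ) ≤ 2),
            show -e₀ = (k:ℝ) + 1/2 by simp only [he₀def]; ring,
            show m ^ ε * m ^ ε * (m ^ e₀ * (2:ℝ) ^ ((k:ℝ) + 1/2)) * m ^ (3:ℝ)
              = m ^ ε * m ^ ε * m ^ e₀ * m ^ (3:ℝ) * (2:ℝ) ^ ((k:ℝ) + 1/2) by ring,
            ← Real.rpow_add hm, ← Real.rpow_add hm, ← Real.rpow_add hm]
          ring_nf
      _ ≤ r₀ ^ (2*ε + e₀ + 3) * (2:ℝ) ^ ((k:ℝ) + 1/2) := by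
          have : m ^ (2*ε + e₀ + 3) ≤ r₀ ^ (2*ε + e₀ + 3) := by
            apply Real.rpow_le_rpow_of_nonpos hr₀ hr
            simp only [he₀def]; linarith
          gcongr
      _ = M₁ := by rw [hM₁def]; ring
      _ ≤ max M₁ M₂ := le_max_left _ _
  · -- |a+b| small: use Baker
    have h1 : |a| ≤ |a + b| + |b| := by
      calc |a| = |(a + b) + (-b)| := by ring_nf
        _ ≤ |a + b| + |(-b)| := abs_add_le _ _
        _ = |a + b| + |b| := by rw [abs_neg]
    have h2 : |b| ≤ |a + b| + |a| := by
      calc |b| = |(a + b) + (-a)| := by ring_nf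
        _ ≤ |a + b| + |(-a)| := abs_add_le _ _
        _ = |a + b| + |a| := by rw [abs_neg]
    have hD : m ≤ |a| + |b| - |a + b| := by
      rcases max_cases |a| |b| with ⟨hmeq, hle⟩ | ⟨hmeq, hle⟩ <;> rw [hmdef, hmeq] <;> linarith
    have hexp : Real.exp (-(Real.pi ^ 2) * (|a| + |b| - |a + b|)) ≤ Real.exp (-m) := by
      rw [Real.exp_le_exp]
      have hπ : (1:ℝ) ≤ Real.pi ^ 2 := by nlinarith [Real.pi_gt_three]
      have hD0 : (0:ℝ) ≤ |a| + |b| - |a + b| := le_trans hm.le hD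
      nlinarith [mul_le_mul_of_nonneg_right hπ hD0]
    have h01 : (0:ℝ) < m + 1 := by linarith
    have hm1 : (1:ℝ) ≤ m + 1 := by linarith
    have hbak2 : |a + b| ^ e₀ ≤ C₀ ^ e₀ * (m + 1) ^ κ' := by
      have hL : (0:ℝ) < C₀ * (max m 1) ^ (-κ) := by positivity
      calc |a + b| ^ e₀ ≤ (C₀ * (max m 1) ^ (-κ)) ^ e₀ :=
            Real.rpow_le_rpow_of_nonpos hL hbak he₀neg
        _ = C₀ ^ e₀ * ((max m 1) ^ (-κ)) ^ e₀ :=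
            Real.mul_rpow hC₀.le (by positivity)
        _ = C₀ ^ e₀ * (max m 1) ^ κ' := by
            rw [← Real.rpow_mul (by positivity : (0:ℝ) ≤ max m 1)]
            congr 2
            simp only [hκ'def, he₀def]; ring
        _ ≤ C₀ ^ e₀ * (m + 1) ^ κ' :=
            mul_le_mul_of_nonneg_left (Real.rpow_le_rpow (by positivity)
              (max_le (by linarith) hm1) hκ'pos.le) (Real.rpow_nonneg hC₀.le _)
    have ha1 : |a| ^ ε ≤ (m + 1) ^ (1:ℝ) := by
      have h' : |a| ^ ε ≤ (m + 1) ^ ε :=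
        Real.rpow_le_rpow (abs_nonneg a) (by linarith) hε.le
      exact h'.trans (Real.rpow_le_rpow_of_exponent_le hm1 (by linarith))
    have hb1 : |b| ^ ε ≤ (m + 1) ^ (1:ℝ) := by
      have h' : |b| ^ ε ≤ (m + 1) ^ ε :=
        Real.rpow_le_rpow (abs_nonneg b) (by linarith) hε.le
      exact h'.trans (Real.rpow_le_rpow_of_exponent_le hm1 (by linarith))
    have hm3 : m ^ (3:ℝ) ≤ (m + 1) ^ (3:ℝ) :=
      Real.rpow_le_rpow hm.le (by linarith) (by norm_num)
    calc Real.exp (-(Real.pi ^ 2) * (|a| + |b| - |a + b|)) * |a| ^ ε * |b| ^ ε *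
          |a + b| ^ e₀ * m ^ (3:ℝ)
        ≤ Real.exp (-m) * (m+1) ^ (1:ℝ) * (m+1) ^ (1:ℝ) * (C₀ ^ e₀ * (m+1) ^ κ')
            * (m+1) ^ (3:ℝ) := by
          gcongr
      _ = C₀ ^ e₀ * (Real.exp (-m) *
            ((m+1) ^ (1:ℝ) * (m+1) ^ (1:ℝ) * (m+1) ^ κ' * (m+1) ^ (3:ℝ))) := by ring
      _ = C₀ ^ e₀ * (Real.exp (-m) * (m+1) ^ (κ' + 5)) := by
          rw [← Real.rpow_add h01, ← Real.rpow_add h01, ← Real.rpow_add h01]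
          ring_nf
      _ ≤ C₀ ^ e₀ * (Real.exp (-m) * (m+1) ^ (Q:ℝ)) := by
          have hQge : κ' + 5 ≤ (Q:ℝ) := by
            have := Nat.le_ceil κ'
            rw [hQdef]; push_cast; linarith
          exact mul_le_mul_of_nonneg_left (mul_le_mul_of_nonneg_left
            (Real.rpow_le_rpow_of_exponent_le hm1 hQge) (Real.exp_pos _).le)
            (Real.rpow_nonneg hC₀.le _)
      _ ≤ C₀ ^ e₀ * (Real.exp (-m) * (Real.exp (m+1) * (Nat.factorial Q : ℝ))) := by
          have hfact : (m+1) ^ (Q:ℝ) ≤ Real.exp (m+1) * (Nat.factorial Q : ℝ) := by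
            rw [Real.rpow_natCast]
            have h := Real.pow_div_factorial_le_exp (m+1) (by linarith) Q
            rw [div_le_iff₀ (by positivity)] at h
            linarith [h]
          exact mul_le_mul_of_nonneg_left (mul_le_mul_of_nonneg_left hfact
            (Real.exp_pos _).le) (Real.rpow_nonneg hC₀.le _)
      _ = M₂ := by
          rw [hM₂def, show Real.exp (-m) * (Real.exp (m+1) * (Nat.factorial Q : ℝ))
            = Real.exp (-m) * Real.exp (m+1) * (Nat.factorial Q : ℝ) by ring, ← Real.exp_add,
            show -m + (m+1) = 1 by ring]
          ring
      _ ≤ max M₁ M₂ := le_max_right _ _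

lemma stmt9_sum (Λ : Submodule ℤ (ℝ × ℝ)) [DiscreteTopology Λ] [IsZLattice ℝ Λ] :
    Summable (fun v : Λ => ‖(v : ℝ × ℝ)‖ ^ (-3 : ℝ)) := by
  have hfin : Module.Finite ℤ Λ := ZLattice.module_finite ℝ Λ
  have hfree : Module.Free ℤ Λ := ZLattice.module_free ℝ Λ
  have hcard : Fintype.card (Module.Free.ChooseBasisIndex ℤ Λ) = 2 := by
    rw [← Module.finrank_eq_card_chooseBasisIndex, ZLattice.rank ℝ Λ]
    simp [Module.finrank_prod]
  let b := (Module.Free.chooseBasis ℤ Λ).reindex (Fintype.equivFinOfCardEq hcard)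
  let B := Module.Basis.ofZLatticeBasis ℝ Λ b
  let F := LinearMap.toContinuousLinearMap (B.equivFun.toLinearMap)
  set C := max ‖F‖ 1 with hCdef
  have hC : (0:ℝ) < C := lt_of_lt_of_le one_pos (le_max_right _ _)
  have hFb : ∀ w : ℝ × ℝ, ‖B.equivFun w‖ ≤ C * ‖w‖ := fun w =>
    (F.le_opNorm w).trans (by gcongr; exact le_max_left _ _)
  have hxcast : ∀ x : Fin 2 → ℤ, ‖(fun i => ((x i : ℤ) : ℝ) : Fin 2 → ℝ)‖ = ‖x‖ := by
    intro x
    rw [Pi.norm_def, Pi.norm_def]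
    congr 1
  rw [← Equiv.summable_iff (b.equivFun.symm.toEquiv)]
  refine Summable.of_nonneg_of_le
    (f := fun x : Fin 2 → ℤ => C ^ (3:ℝ) * ‖x‖ ^ (-3:ℝ))
    (fun x => Real.rpow_nonneg (norm_nonneg _) _) ?_ ?_
  · intro x
    simp only [Function.comp_apply]
    by_cases hx : x = 0
    · subst hx
      have h0 : (b.equivFun.symm.toEquiv 0 : ℝ × ℝ) = 0 := by
        simp
      rw [h0, norm_zero, Real.zero_rpow (by norm_num : (-3:ℝ) ≠ 0)]
      positivity
    · set w : Λ := b.equivFun.symm x with hwdef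
      have hrepr : B.equivFun (w : ℝ × ℝ) = fun i => ((x i : ℤ) : ℝ) := by
        funext i
        rw [Module.Basis.equivFun_apply, Module.Basis.ofZLatticeBasis_repr_apply]
        congr 1
        have : b.equivFun w = x := b.equivFun.apply_symm_apply x
        rw [← this, Module.Basis.equivFun_apply]
      have hxw : ‖x‖ ≤ C * ‖(w : ℝ × ℝ)‖ := by
        rw [← hxcast x, ← hrepr]; exact hFb _
      have hxpos : (0:ℝ) < ‖x‖ := norm_pos_iff.mpr hx
      have hwpos : (0:ℝ) < ‖(w : ℝ × ℝ)‖ := by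
        rcases lt_or_ge 0 ‖(w : ℝ × ℝ)‖ with h | h
        · exact h
        · exfalso; nlinarith
      have hdiv : ‖x‖ / C ≤ ‖(w : ℝ × ℝ)‖ := by
        rw [div_le_iff₀ hC]; linarith [hxw]
      calc ‖(w : ℝ × ℝ)‖ ^ (-3:ℝ) ≤ (‖x‖ / C) ^ (-3:ℝ) :=
            Real.rpow_le_rpow_of_nonpos (by positivity) hdiv (by norm_num)
        _ = C ^ (3:ℝ) * ‖x‖ ^ (-3:ℝ) := by
            rw [Real.div_rpow (norm_nonneg _) hC.le, Real.rpow_neg hC.le,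
              div_eq_mul_inv, inv_inv]
            ring
  · exact (EisensteinSeries.summable_one_div_norm_rpow (by norm_num : (2:ℝ) < 3)).mul_left _

set_option maxHeartbeats 1000000 in
/-- Let `Λ` be a full-rank lattice in `ℝ²`, `k ≥ 3` an integer, `0 < ε < 1/4`.
If a Baker-type lower bound `|ν₁ + ν₂| ≥ C₀ · max(|ν₁|, |ν₂|, 1)^{-κ}` holds for
nonzero lattice points, then the sum
`∑_{0 ≠ ν ∈ Λ} exp(-π²(|ν₁|+|ν₂|-|ν₁+ν₂|)) |ν₁|^ε |ν₂|^ε |ν₁+ν₂|^{-k-1/2}`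
(over `ν` with `ν₁ ≠ 0`, `ν₂ ≠ 0`, `ν₁ + ν₂ ≠ 0`) converges. -/
theorem stmt9 (Λ : Submodule ℤ (ℝ × ℝ)) [DiscreteTopology Λ] [IsZLattice ℝ Λ]
    (k : ℕ) (hk : 3 ≤ k) (ε : ℝ) (hε : 0 < ε) (hε' : ε < 1/4)
    (C₀ κ : ℝ) (hC₀ : 0 < C₀) (hκ : 0 < κ)
    (hbaker : ∀ v : ℝ × ℝ, v ∈ Λ → v ≠ 0 →
      C₀ * (max (max |v.1| |v.2|) 1) ^ (-κ) ≤ |v.1 + v.2|) :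
    Summable (fun v : {v : ℝ × ℝ // v ∈ Λ ∧ v ≠ 0 ∧ v.1 ≠ 0 ∧ v.2 ≠ 0 ∧ v.1 + v.2 ≠ 0} =>
      Real.exp (-(Real.pi ^ 2) * (|v.1.1| + |v.1.2| - |v.1.1 + v.1.2|)) *
        |v.1.1| ^ ε * |v.1.2| ^ ε * |v.1.1 + v.1.2| ^ (-(k : ℝ) - 1/2)) := by
  -- a lower bound on norms of nonzero lattice points
  obtain ⟨r₀, hr₀pos, hr₀⟩ : ∃ r > 0, ∀ v : ℝ × ℝ, v ∈ Λ → ‖v‖ < r → v = 0 := by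
    obtain ⟨r, hr, hball⟩ := Metric.isOpen_iff.mp (isOpen_discrete ({0} : Set Λ)) 0 rfl
    refine ⟨r, hr, fun v hv hvr => ?_⟩
    have : (⟨v, hv⟩ : Λ) ∈ Metric.ball (0 : Λ) r := by
      rw [Metric.mem_ball, Subtype.dist_eq]
      simpa [dist_zero_right] using hvr
    have := hball this
    simpa [Subtype.ext_iff] using this
  obtain ⟨M, hM⟩ := stmt9_aux k hk ε C₀ κ r₀ hε hε' hC₀ hκ hr₀pos
  set S := {v : ℝ × ℝ // v ∈ Λ ∧ v ≠ 0 ∧ v.1 ≠ 0 ∧ v.2 ≠ 0 ∧ v.1 + v.2 ≠ 0} with hSdef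
  have hinj : Function.Injective (fun v : S => (⟨v.1, v.2.1⟩ : Λ)) := by
    intro u v h
    exact Subtype.ext (by simpa [Subtype.mk.injEq] using h)
  have hdom : Summable ((fun w : Λ => M * ‖(w : ℝ × ℝ)‖ ^ (-3:ℝ)) ∘
      (fun v : S => (⟨v.1, v.2.1⟩ : Λ))) :=
    ((stmt9_sum Λ).mul_left M).comp_injective hinj
  refine Summable.of_nonneg_of_le (fun v => by positivity) (fun v => ?_) hdom
  simp only [Function.comp_apply]
  obtain ⟨hvΛ, hv0, ha, hb, hs⟩ := v.2
  have hnorm : ‖(v.1 : ℝ × ℝ)‖ = max |v.1.1| |v.1.2| := by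
    rw [Prod.norm_def, Real.norm_eq_abs, Real.norm_eq_abs]
  have hr : r₀ ≤ max |v.1.1| |v.1.2| := by
    rw [← hnorm]
    by_contra hlt
    exact hv0 (hr₀ v.1 hvΛ (lt_of_not_ge hlt))
  have := hM v.1.1 v.1.2 ha hb hs hr (hbaker v.1 hvΛ hv0)
  rw [hnorm]
  exact this
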